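/- There is a universal constant C such that for all integers n ≥ 2 and all s ∈ (0, 1), | log Q_n(s) − (n/2) log(1 − s²) + (1/2) log n | ≤ C − log s − (1/2) log(1 − s²). -/

import Mathlib

open MeasureTheory Real

noncomputable section

/-- The normalizing constant `κ_n = Γ(n/2)/(√π·Γ((n-1)/2))`. -/
def kappaConst (n : ℕ) : ℝ :=
  Real.Gamma ((n : ℝ) / 2) / (Real.sqrt Real.pi * Real.Gamma (((n : ℝ) - 1) / 2))

/-- `Q_n(g) = κ_n ∫_g^1 (1 - t²)^{(n-3)/2} dt`. -/
def Qfun (n : ℕ) (g : ℝ) : ℝ :=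
  kappaConst n * ∫ t in g..1, (1 - t ^ 2) ^ (((n : ℝ) - 3) / 2)

end

/-!
Write `Q_n(s) = κ_n I` with `I = ∫_s^1 (1 - t²)^p dt`, `p = (n-3)/2`. Since `s ≤ t ≤ 1` on
`[s, 1]`, `I` lies between `∫_s^1 t (1 - t²)^p dt = (1 - s²)^{(n-1)/2} / (n - 1)` and `1/s`
times it. Log-convexity of `Γ` gives the Gautschi-type bounds
`x / √(x + 1/2) ≤ Γ(x + 1/2) / Γ(x) ≤ √x`, so `κ_n` is `√n` up to a bounded factor. After
taking logarithms, every error term is a constant, `-log s` or `-log(1 - s²)/2`.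
-/

section OneSubSqRpow

variable {p s : ℝ}

lemma hasDerivAt_one_sub_sq_rpow_add_one (hp : p + 1 ≠ 0) {t : ℝ} (ht : 1 - t ^ 2 ≠ 0) :
    HasDerivAt (fun t : ℝ => -(1 - t ^ 2) ^ (p + 1) / (2 * (p + 1))) (t * (1 - t ^ 2) ^ p) t := by
  have hinner : HasDerivAt (fun t : ℝ => 1 - t ^ 2) (-(2 * t)) t := by
    simpa using (hasDerivAt_pow 2 t).const_sub 1
  refine ((hinner.rpow_const (p := p + 1) (Or.inl ht)).neg.div_const (2 * (p + 1))).congr_deriv ?_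
  rw [add_sub_cancel_right]
  field_simp

lemma continuous_one_sub_sq_rpow {q : ℝ} (hq : 0 ≤ q) :
    Continuous fun t : ℝ => (1 - t ^ 2) ^ q :=
  (continuous_rpow_const hq).comp (continuous_const.sub (continuous_pow 2))

lemma intervalIntegrable_and_integral_mul_one_sub_sq_rpow (hp : -1 < p) (hs0 : 0 ≤ s)
    (hs1 : s ≤ 1) :
    IntervalIntegrable (fun t : ℝ => t * (1 - t ^ 2) ^ p) volume s 1 ∧
      ∫ t in s..1, t * (1 - t ^ 2) ^ p = (1 - s ^ 2) ^ (p + 1) / (2 * (p + 1)) := by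
  have hF : ContinuousOn (fun t : ℝ => -(1 - t ^ 2) ^ (p + 1) / (2 * (p + 1))) (Set.Icc s 1) :=
    ((continuous_one_sub_sq_rpow (by linarith)).neg.div_const _).continuousOn
  have hderiv : ∀ t ∈ Set.Ioo s 1,
      HasDerivAt (fun t : ℝ => -(1 - t ^ 2) ^ (p + 1) / (2 * (p + 1))) (t * (1 - t ^ 2) ^ p) t :=
    fun t ht => hasDerivAt_one_sub_sq_rpow_add_one (by linarith) (by nlinarith [ht.1, ht.2])
  have hint : IntervalIntegrable (fun t : ℝ => t * (1 - t ^ 2) ^ p) volume s 1 := by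
    refine intervalIntegral.intervalIntegrable_deriv_of_nonneg (by rwa [Set.uIcc_of_le hs1]) ?_ ?_
    all_goals intro t ht; rw [min_eq_left hs1, max_eq_right hs1] at ht
    · exact hderiv t ht
    · exact mul_nonneg (by linarith [ht.1]) (rpow_nonneg (by nlinarith [ht.1, ht.2]) p)
  refine ⟨hint, ?_⟩
  rw [intervalIntegral.integral_eq_sub_of_hasDeriv_right_of_le hs1 hF
    (fun t ht => (hderiv t ht).hasDerivWithinAt) hint]
  norm_num [zero_rpow (by linarith : p + 1 ≠ 0)]
  ring

lemma one_sub_sq_rpow_le_inv_mul (hs0 : 0 < s) {t : ℝ} (ht : t ∈ Set.Icc s 1) :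
    (1 - t ^ 2) ^ p ≤ s⁻¹ * (t * (1 - t ^ 2) ^ p) := by
  rw [inv_mul_eq_div, le_div_iff₀' hs0]
  exact mul_le_mul_of_nonneg_right ht.1 (rpow_nonneg (by nlinarith [ht.1, ht.2]) p)

lemma intervalIntegrable_one_sub_sq_rpow (hp : -1 < p) (hs0 : 0 < s) (hs1 : s ≤ 1) :
    IntervalIntegrable (fun t : ℝ => (1 - t ^ 2) ^ p) volume s 1 := by
  have hint := (intervalIntegrable_and_integral_mul_one_sub_sq_rpow hp hs0.le hs1).1
  refine (hint.const_mul s⁻¹).mono_fun'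
    ((measurable_const.sub (measurable_id.pow_const 2)).pow_const p).aestronglyMeasurable ?_
  filter_upwards [ae_restrict_mem measurableSet_uIoc] with t ht
  rw [Set.uIoc_of_le hs1] at ht
  rw [norm_of_nonneg (rpow_nonneg (by nlinarith [ht.1, ht.2]) p)]
  exact one_sub_sq_rpow_le_inv_mul hs0 ⟨ht.1.le, ht.2⟩

lemma le_integral_one_sub_sq_rpow (hp : -1 < p) (hs0 : 0 < s) (hs1 : s ≤ 1) :
    (1 - s ^ 2) ^ (p + 1) / (2 * (p + 1)) ≤ ∫ t in s..1, (1 - t ^ 2) ^ p := by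
  obtain ⟨hint, hval⟩ := intervalIntegrable_and_integral_mul_one_sub_sq_rpow hp hs0.le hs1
  rw [← hval]
  refine intervalIntegral.integral_mono_on hs1 hint (intervalIntegrable_one_sub_sq_rpow hp hs0 hs1)
    fun t ht => ?_
  exact mul_le_of_le_one_left (rpow_nonneg (by nlinarith [ht.1, ht.2]) p) ht.2

lemma integral_one_sub_sq_rpow_le (hp : -1 < p) (hs0 : 0 < s) (hs1 : s ≤ 1) :
    ∫ t in s..1, (1 - t ^ 2) ^ p ≤ (1 - s ^ 2) ^ (p + 1) / (2 * (p + 1)) / s := by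
  obtain ⟨hint, hval⟩ := intervalIntegrable_and_integral_mul_one_sub_sq_rpow hp hs0.le hs1
  calc ∫ t in s..1, (1 - t ^ 2) ^ p ≤ ∫ t in s..1, s⁻¹ * (t * (1 - t ^ 2) ^ p) :=
        intervalIntegral.integral_mono_on hs1 (intervalIntegrable_one_sub_sq_rpow hp hs0 hs1)
          (hint.const_mul s⁻¹) fun t ht => one_sub_sq_rpow_le_inv_mul hs0 ht
    _ = (1 - s ^ 2) ^ (p + 1) / (2 * (p + 1)) / s := by
        rw [intervalIntegral.integral_const_mul, hval, inv_mul_eq_div]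

lemma integral_one_sub_sq_rpow_pos (hp : -1 < p) (hs0 : 0 < s) (hs1 : s < 1) :
    0 < ∫ t in s..1, (1 - t ^ 2) ^ p := by
  have hs2 : 0 < 1 - s ^ 2 := by nlinarith
  have hq : 0 < p + 1 := by linarith
  exact lt_of_lt_of_le (by positivity) (le_integral_one_sub_sq_rpow hp hs0 hs1.le)

lemma log_integral_one_sub_sq_rpow_mem_Icc (hp : -1 < p) (hs0 : 0 < s) (hs1 : s < 1) :
    log (∫ t in s..1, (1 - t ^ 2) ^ p) ∈ Set.Icc
      ((p + 1) * log (1 - s ^ 2) - log (2 * (p + 1)))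
      ((p + 1) * log (1 - s ^ 2) - log (2 * (p + 1)) - log s) := by
  have hq : 0 < 2 * (p + 1) := by linarith
  have hs2 : 0 < 1 - s ^ 2 := by nlinarith
  have hlower : 0 < (1 - s ^ 2) ^ (p + 1) / (2 * (p + 1)) := by positivity
  have hlog : log ((1 - s ^ 2) ^ (p + 1) / (2 * (p + 1))) =
      (p + 1) * log (1 - s ^ 2) - log (2 * (p + 1)) := by
    rw [log_div (by positivity) hq.ne', log_rpow hs2]
  constructor
  · rw [← hlog]
    exact log_le_log hlower (le_integral_one_sub_sq_rpow hp hs0 hs1.le)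
  · rw [← hlog, ← log_div hlower.ne' hs0.ne']
    exact log_le_log (integral_one_sub_sq_rpow_pos hp hs0 hs1)
      (integral_one_sub_sq_rpow_le hp hs0 hs1.le)

end OneSubSqRpow

namespace Real

lemma log_Gamma_midpoint_le {a b : ℝ} (ha : 0 < a) (hb : 0 < b) :
    log (Gamma ((a + b) / 2)) ≤ (log (Gamma a) + log (Gamma b)) / 2 := by
  have h := convexOn_log_Gamma.2 (Set.mem_Ioi.2 ha) (Set.mem_Ioi.2 hb)
    (by norm_num : (0 : ℝ) ≤ 1 / 2) (by norm_num : (0 : ℝ) ≤ 1 / 2) (by norm_num)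
  simp only [smul_eq_mul, Function.comp_apply] at h
  rw [show (1 : ℝ) / 2 * a + 1 / 2 * b = (a + b) / 2 by ring] at h
  linarith

lemma log_Gamma_add_half_le {x : ℝ} (hx : 0 < x) :
    log (Gamma (x + 1 / 2)) ≤ log (Gamma x) + log x / 2 := by
  have h := log_Gamma_midpoint_le hx (by linarith : 0 < x + 1)
  rw [show (x + (x + 1)) / 2 = x + 1 / 2 by ring, Gamma_add_one hx.ne',
    log_mul hx.ne' (Gamma_pos_of_pos hx).ne'] at h
  linarith

lemma le_log_Gamma_add_half {x : ℝ} (hx : 0 < x) :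
    log (Gamma x) + log x - log (x + 1 / 2) / 2 ≤ log (Gamma (x + 1 / 2)) := by
  have hx' : 0 < x + 1 / 2 := by linarith
  have h := log_Gamma_midpoint_le hx' (by linarith : 0 < x + 3 / 2)
  rw [show (x + 1 / 2 + (x + 3 / 2)) / 2 = x + 1 by ring,
    show x + (3 : ℝ) / 2 = x + 1 / 2 + 1 by ring,
    Gamma_add_one hx'.ne', Gamma_add_one hx.ne', log_mul hx'.ne' (Gamma_pos_of_pos hx').ne',
    log_mul hx.ne' (Gamma_pos_of_pos hx).ne'] at h
  linarith

end Real

section kappaConst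

variable {n : ℕ}

lemma kappaConst_pos (hn : 2 ≤ n) : 0 < kappaConst n := by
  have hn' : (2 : ℝ) ≤ n := by exact_mod_cast hn
  have := Gamma_pos_of_pos (by linarith : (0 : ℝ) < n / 2)
  have := Gamma_pos_of_pos (by linarith : (0 : ℝ) < (n - 1) / 2)
  unfold kappaConst
  positivity

lemma log_kappaConst (hn : 2 ≤ n) :
    log (kappaConst n) = log (Gamma (n / 2)) - log (Gamma ((n - 1) / 2)) - log π / 2 := by
  have hn' : (2 : ℝ) ≤ n := by exact_mod_cast hn
  have hΓ := Gamma_pos_of_pos (by linarith : (0 : ℝ) < (n - 1) / 2)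
  have hsqrt := sqrt_pos.2 pi_pos
  rw [kappaConst, log_div (Gamma_pos_of_pos (by linarith)).ne' (by positivity),
    log_mul hsqrt.ne' hΓ.ne', log_sqrt pi_pos.le]
  ring

lemma log_kappaConst_le (hn : 2 ≤ n) : log (kappaConst n) ≤ log n / 2 := by
  have hn' : (2 : ℝ) ≤ n := by exact_mod_cast hn
  have hx : (0 : ℝ) < (n - 1) / 2 := by linarith
  have hΓ := log_Gamma_add_half_le hx
  rw [show ((n : ℝ) - 1) / 2 + 1 / 2 = n / 2 by ring] at hΓ
  have hxn : log (((n : ℝ) - 1) / 2) ≤ log n := log_le_log hx (by linarith)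
  have hπ : 0 ≤ log π := log_nonneg (by linarith [pi_gt_three])
  rw [log_kappaConst hn]
  linarith

lemma log_kappaConst_ge (hn : 2 ≤ n) : log n / 2 - 2 ≤ log (kappaConst n) := by
  have hn' : (2 : ℝ) ≤ n := by exact_mod_cast hn
  have hx : (0 : ℝ) < (n - 1) / 2 := by linarith
  have hΓ := le_log_Gamma_add_half hx
  rw [show ((n : ℝ) - 1) / 2 + 1 / 2 = n / 2 by ring,
    log_div (x := n) (by linarith) two_ne_zero] at hΓ
  have hxn : log n - 2 * log 2 ≤ log (((n : ℝ) - 1) / 2) := by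
    rw [← log_rpow two_pos, ← log_div (by linarith) (by positivity)]
    exact log_le_log (by positivity) (by norm_num; linarith)
  have hπ : log π ≤ 2 * log 2 := by
    rw [← log_rpow two_pos]
    exact log_le_log pi_pos (by norm_num; linarith [pi_le_four])
  rw [log_kappaConst hn]
  linarith [log_two_lt_d9]

end kappaConst

/-- There is a universal constant `C` such that for all
`n ≥ 2` and `s ∈ (0,1)`,
`|log Q_n(s) - (n/2)log(1-s²) + (1/2)log n| ≤ C - log s - (1/2)log(1-s²)`. -/
theorem stmt15 :
    ∃ C : ℝ, ∀ (n : ℕ), 2 ≤ n → ∀ s ∈ Set.Ioo (0 : ℝ) 1,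
      abs (Real.log (Qfun n s) - (n : ℝ) / 2 * Real.log (1 - s ^ 2) +
          1 / 2 * Real.log n) ≤
        C - Real.log s - 1 / 2 * Real.log (1 - s ^ 2) := by
  refine ⟨2, fun n hn s ⟨hs0, hs1⟩ => ?_⟩
  have hn' : (2 : ℝ) ≤ n := by exact_mod_cast hn
  have hp : -1 < ((n : ℝ) - 3) / 2 := by linarith
  obtain ⟨hIl, hIu⟩ := log_integral_one_sub_sq_rpow_mem_Icc hp hs0 hs1
  have hI := integral_one_sub_sq_rpow_pos hp hs0 hs1
  rw [show 2 * (((n : ℝ) - 3) / 2 + 1) = n - 1 by ring] at hIl hIu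
  have hlog_pred : log (n - 1 : ℝ) ≤ log n := log_le_log (by linarith) (by linarith)
  have hlog_le : log n ≤ log 2 + log (n - 1 : ℝ) := by
    rw [← log_mul two_ne_zero (by linarith)]
    exact log_le_log (by linarith) (by linarith)
  have hlog2 : log 2 < 2 := by linarith [log_two_lt_d9]
  have hlogs : log s ≤ 0 := log_nonpos hs0.le hs1.le
  have hL : log (1 - s ^ 2) ≤ 0 := log_nonpos (by nlinarith) (by nlinarith)
  have hκ_le := log_kappaConst_le hn
  have hκ_ge := log_kappaConst_ge hn
  rw [Qfun, log_mul (kappaConst_pos hn).ne' hI.ne', abs_le]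
  constructor <;> linarith
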